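/- arXiv:2206.03541 — 3 statements merged into one kernel-verified Lean document; each statement's English description precedes it below -/
import Mathlib

section
/- Let F/F_q be a field extension and P a finite p-group where q is a power of the prime p. Every unit of the Laurent series group ring F((t^{-1}))[P] factors uniquely as a product of a monic element and an element of F[t][P]^×, where the monic elements are defined as the union over n ∈ Z of t^n·(1 + t^{-1}F[P][[t^{-1}]]). -/
/-- An element of `R((t⁻¹))`, viewed as a Laurent series in the variable `u = t⁻¹`
(so `t^n = u^{-n}`), is *monic* if it lies in `⋃_{n ∈ ℤ} t^n·(1 + t⁻¹·R[[t⁻¹]])`,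
i.e. if for some `m ∈ ℤ` its coefficient at `u^m` is `1` and all coefficients at
exponents `< m` vanish. -/
def IsMonicLaurent {R : Type*} [CommRing R] (x : LaurentSeries R) : Prop :=
  ∃ m : ℤ, x.coeff m = 1 ∧ ∀ k < m, x.coeff k = 0

/-- An element of `R((t⁻¹))` (Laurent series in `u = t⁻¹`) lies in the polynomial ring
`R[t]` iff all its coefficients at positive powers of `u` vanish. -/
def IsPolyLaurent {R : Type*} [CommRing R] (x : LaurentSeries R) : Prop :=
  ∀ k : ℤ, 0 < k → x.coeff k = 0

/-!
Over a commutative local ring `R` with nilpotent maximal ideal `𝔪`, write `u = t⁻¹`. A unit `x` of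
`R((u))` has a first unit coefficient, at the index `d` where its reduction modulo `𝔪` starts;
pulling out that coefficient and the part of `x` from `u^d` on writes `x = M · c · (1 + ε)` with
`M` monic, `c ∈ Rˣ` and all coefficients of `ε` in `𝔪`. Splitting `ε = εₚ + εₗ` into its parts in
`u R[[u]]` and in `R[t]` gives `1 + ε = (1 + εₚ)(1 + εₗ)(1 + ε')` with `ε'` having coefficients in
`𝔪²`, and iterating terminates because `𝔪` is nilpotent. For uniqueness, modulo `𝔪` a unit of
`k[t]` is a nonzero constant, so two monic factors have the same order, and then the lowest term
of `w - 1` for the quotient `w` of the polynomial factors would survive in their difference.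

The group algebra `F[P]` of a `p`-group in characteristic `p` is such a ring: it is finite
dimensional, and `(g - 1)^(p^k) = g^(p^k) - 1 = 0` makes the augmentation ideal nil.
-/

open HahnSeries IsLocalRing

namespace HahnSeries

variable {Γ R S : Type*}

theorem order_eq_of_coeff_ne_zero [Zero Γ] [LinearOrder Γ] [Zero R] {x : HahnSeries Γ R} {i : Γ}
    (hi : x.coeff i ≠ 0) (h : ∀ j < i, x.coeff j = 0) : x.order = i :=
  le_antisymm (order_le_of_coeff_ne_zero hi)
    ((le_order_iff_forall (ne_zero_of_coeff_ne_zero hi)).2 h)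

variable [AddCommMonoid Γ] [PartialOrder Γ] [IsOrderedCancelAddMonoid Γ]

def mapRingHom [Semiring R] [Semiring S] (f : R →+* S) : HahnSeries Γ R →+* HahnSeries Γ S where
  toFun x := x.map f
  map_one' := HahnSeries.map_one f.toMonoidWithZeroHom
  map_mul' _ _ := HahnSeries.map_mul f.toNonUnitalRingHom
  map_zero' := HahnSeries.map_zero f.toMonoidWithZeroHom.toZeroHom
  map_add' _ _ := HahnSeries.map_add f.toAddMonoidHom

@[simp]
theorem coeff_mapRingHom [Semiring R] [Semiring S] (f : R →+* S) (x : HahnSeries Γ R) (i : Γ) :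
    (mapRingHom f x).coeff i = f (x.coeff i) := rfl

variable [CommRing R]

def coeffIdeal (I : Ideal R) : Ideal (HahnSeries Γ R) where
  carrier := {x | ∀ i, x.coeff i ∈ I}
  add_mem' hx hy i := I.add_mem (hx i) (hy i)
  zero_mem' _ := I.zero_mem
  smul_mem' c x hx i := by
    rw [smul_eq_mul, coeff_mul]
    exact I.sum_mem fun ij _ => I.mul_mem_left _ (hx ij.2)

theorem coeffIdeal_mul_le (I J : Ideal R) :
    coeffIdeal I * coeffIdeal J ≤ (coeffIdeal (I * J) : Ideal (HahnSeries Γ R)) :=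
  Ideal.mul_le.2 fun x hx y hy i => by
    rw [coeff_mul]
    exact Ideal.sum_mem _ fun ij _ => Ideal.mul_mem_mul (hx ij.1) (hy ij.2)

theorem coeffIdeal_pow_le (I : Ideal R) (n : ℕ) :
    coeffIdeal I ^ n ≤ (coeffIdeal (I ^ n) : Ideal (HahnSeries Γ R)) := by
  induction n with
  | zero =>
    simp only [pow_zero, Ideal.one_eq_top]
    exact fun _ _ _ => Submodule.mem_top
  | succ n ih =>
    rw [pow_succ, pow_succ]
    exact (Ideal.mul_mono_left ih).trans (coeffIdeal_mul_le _ _)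

theorem pow_eq_zero_of_mem_coeffIdeal {I : Ideal R} {n : ℕ} (hI : I ^ n = ⊥)
    {x : HahnSeries Γ R} (hx : x ∈ coeffIdeal I) : x ^ n = 0 := by
  ext i
  simpa [hI] using coeffIdeal_pow_le I n (Ideal.pow_mem_pow hx n) i

end HahnSeries

theorem Subring.exists_mem_units_val_eq_one_add {A : Type*} [Ring A] {S : Subring A} {s : A}
    (hs : s ∈ S) (hnil : IsNilpotent s) :
    ∃ u : Aˣ, u ∈ S.toSubmonoid.units ∧ (u : A) = 1 + s := by
  obtain ⟨n, hn⟩ := hnil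
  have : IsNilpotent (⟨s, hs⟩ : S) := ⟨n, Subtype.ext (by simpa using hn)⟩
  obtain ⟨v, hv⟩ := this.isUnit_one_add
  refine ⟨Units.map S.subtype.toMonoidHom v, ⟨(v : S).2, (↑v⁻¹ : S).2⟩, ?_⟩
  simp [hv]

section Laurent

variable {R S : Type*} [CommRing R] [CommRing S]

def polySubring (R : Type*) [CommRing R] : Subring (LaurentSeries R) where
  carrier := {x | IsPolyLaurent x}
  mul_mem' hx hy k hk := by
    rw [coeff_mul]
    refine Finset.sum_eq_zero fun ij hij => ?_
    rw [Finset.mem_antidiagonal] at hij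
    rcases lt_or_ge 0 ij.1 with h | h
    · rw [hx _ h, zero_mul]
    · rw [hy _ (by omega), mul_zero]
  one_mem' k hk := by rw [coeff_one, if_neg hk.ne']
  add_mem' hx hy k hk := by rw [coeff_add, hx k hk, hy k hk, add_zero]
  zero_mem' _ _ := rfl
  neg_mem' hx k hk := by rw [coeff_neg, hx k hk, neg_zero]

theorem mem_polySubring {x : LaurentSeries R} : x ∈ polySubring R ↔ IsPolyLaurent x := Iff.rfl

theorem C_mem_polySubring (r : R) : C r ∈ polySubring R := fun k hk => by
  rw [C_apply, coeff_single_of_ne hk.ne']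

theorem truncLT_one_mem_polySubring (x : LaurentSeries R) : truncLT 1 x ∈ polySubring R :=
  fun _ hk => coeff_truncLT_of_le hk x

theorem mapRingHom_mem_polySubring (f : R →+* S) {x : LaurentSeries R} (hx : x ∈ polySubring R) :
    mapRingHom f x ∈ polySubring S := fun k hk => by
  rw [coeff_mapRingHom, hx k hk, map_zero]

theorem order_nonpos_of_mem_polySubring {x : LaurentSeries R} (hx : x ∈ polySubring R)
    (hx0 : x ≠ 0) : x.order ≤ 0 :=
  not_lt.1 fun h => hx0 (coeff_order_eq_zero.1 (hx _ h))

theorem order_eq_zero_of_mem_polySubring_of_mul_eq_one [IsDomain R] {x y : LaurentSeries R}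
    (hx : x ∈ polySubring R) (hy : y ∈ polySubring R) (h : x * y = 1) : x.order = 0 := by
  have hx0 := left_ne_zero_of_mul_eq_one h
  have hy0 := right_ne_zero_of_mul_eq_one h
  have hsum : x.order + y.order = 0 := by rw [← order_mul hx0 hy0, h, order_one]
  have := order_nonpos_of_mem_polySubring hx hx0
  have := order_nonpos_of_mem_polySubring hy hy0
  omega

theorem isMonicLaurent_iff_leadingCoeff_eq_one [Nontrivial R] {x : LaurentSeries R} :
    IsMonicLaurent x ↔ x.leadingCoeff = 1 := by
  constructor
  · rintro ⟨m, h1, h0⟩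
    rw [leadingCoeff_eq, order_eq_of_coeff_ne_zero (by rw [h1]; exact one_ne_zero) h0, h1]
  · intro h
    exact ⟨x.order, by rwa [← leadingCoeff_eq], fun k hk => coeff_eq_zero_of_lt_order hk⟩

namespace IsMonicLaurent

variable [Nontrivial R] {x y : LaurentSeries R}

theorem leadingCoeff_eq_one (hx : IsMonicLaurent x) : x.leadingCoeff = 1 :=
  isMonicLaurent_iff_leadingCoeff_eq_one.1 hx

theorem mul (hx : IsMonicLaurent x) (hy : IsMonicLaurent y) : IsMonicLaurent (x * y) := by
  have h : x.leadingCoeff * y.leadingCoeff = 1 := by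
    rw [hx.leadingCoeff_eq_one, hy.leadingCoeff_eq_one, one_mul]
  rw [isMonicLaurent_iff_leadingCoeff_eq_one,
    leadingCoeff_mul_of_ne_zero (by rw [h]; exact one_ne_zero), h]

theorem isUnit (hx : IsMonicLaurent x) : IsUnit x :=
  isUnit_of_isUnit_leadingCoeff_AddUnitOrder (hx.leadingCoeff_eq_one ▸ isUnit_one)
    (AddGroup.isAddUnit _)

theorem order_mapRingHom [Nontrivial S] (f : R →+* S) (hx : IsMonicLaurent x) :
    (mapRingHom f x).order = x.order := by
  refine order_eq_of_coeff_ne_zero ?_ fun j hj => ?_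
  · rw [coeff_mapRingHom, ← leadingCoeff_eq, hx.leadingCoeff_eq_one, map_one]
    exact one_ne_zero
  · rw [coeff_mapRingHom, coeff_eq_zero_of_lt_order hj, map_zero]

end IsMonicLaurent

noncomputable abbrev polyUnits (R : Type*) [CommRing R] : Subgroup (LaurentSeries R)ˣ :=
  (polySubring R).toSubmonoid.units

theorem units_map_C_mem_polyUnits (u : Rˣ) :
    Units.map (C : R →+* LaurentSeries R).toMonoidHom u ∈ polyUnits R :=
  ⟨C_mem_polySubring _, C_mem_polySubring _⟩

theorem exists_isMonicLaurent_mul_eq_one_add [Nontrivial R] (c : ℕ) (J : Ideal R)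
    (hJ : J ^ 2 ^ c = ⊥) (ε : LaurentSeries R) (hε : ε ∈ coeffIdeal J) :
    ∃ (m : LaurentSeries R) (g : (LaurentSeries R)ˣ),
      IsMonicLaurent m ∧ g ∈ polyUnits R ∧ 1 + ε = m * g := by
  induction c generalizing J ε with
  | zero =>
    have hε0 : ε = 0 := by simpa using pow_eq_zero_of_mem_coeffIdeal (n := 1) (by simpa using hJ) hε
    exact ⟨1, 1, isMonicLaurent_iff_leadingCoeff_eq_one.2 leadingCoeff_one, one_mem _,
      by simp [hε0]⟩
  | succ c ih =>
    set εl := truncLT 1 ε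
    set εp := ε - εl
    have hεl : εl ∈ coeffIdeal J := fun k => by
      rw [HahnSeries.coeff_truncLT]
      split_ifs
      exacts [hε k, J.zero_mem]
    have hεp : εp ∈ coeffIdeal J := sub_mem hε hεl
    obtain ⟨v, hv, hv1⟩ := Subring.exists_mem_units_val_eq_one_add (truncLT_one_mem_polySubring ε)
      ⟨_, pow_eq_zero_of_mem_coeffIdeal hJ hεl⟩
    have hmonic : IsMonicLaurent (1 + εp) := by
      refine ⟨0, ?_, fun k hk => ?_⟩
      · simp [εp, εl]
      · simp [εp, εl, hk.ne, hk.trans zero_lt_one]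
    obtain ⟨w, hw⟩ := hmonic.isUnit.exists_right_inv
    have hε₃ : -(w * ↑v⁻¹ * (εp * εl)) ∈ coeffIdeal (J ^ 2) :=
      neg_mem <| Ideal.mul_mem_left _ _ <|
        pow_two J ▸ coeffIdeal_mul_le J J (Ideal.mul_mem_mul hεp hεl)
    have hJ2 : (J ^ 2) ^ 2 ^ c = ⊥ := by rw [← pow_mul, ← pow_succ']; exact hJ
    obtain ⟨m, g, hm, hg, hfac⟩ := ih (J ^ 2) hJ2 _ hε₃
    refine ⟨(1 + εp) * m, v * g, hmonic.mul hm, mul_mem hv hg, ?_⟩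
    rw [Units.val_mul]
    linear_combination ((1 + εp) * ↑v) * hfac + (↑v * ↑v⁻¹ * εp * εl) * hw
      + (εp * εl) * v.mul_inv - (1 + εp) * hv1

variable [IsLocalRing R]

theorem exists_isMonicLaurent_mul_mem_polyUnits (hR : IsNilpotent (maximalIdeal R))
    (x : (LaurentSeries R)ˣ) : ∃ (m : LaurentSeries R) (g : (LaurentSeries R)ˣ),
      IsMonicLaurent m ∧ g ∈ polyUnits R ∧ (x : LaurentSeries R) = m * g := by
  set X : LaurentSeries R := ↑x
  set π := mapRingHom (Γ := ℤ) (residue R)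
  have hπX : π X ≠ 0 := (x.isUnit.map π).ne_zero
  set d := (π X).order
  obtain ⟨u, hu⟩ : IsUnit (X.coeff d) := by
    rw [← residue_ne_zero_iff_isUnit, ← coeff_mapRingHom, ← leadingCoeff_eq]
    exact leadingCoeff_ne_zero.2 hπX
  set lo := truncLT d X
  have hlo : lo ∈ coeffIdeal (maximalIdeal R) := fun k => by
    rw [HahnSeries.coeff_truncLT]
    split_ifs with hk
    · rw [← residue_eq_zero_iff, ← coeff_mapRingHom]
      exact coeff_eq_zero_of_lt_order hk
    · exact zero_mem _
  set M := C (↑u⁻¹ : R) * (X - lo)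
  have hM : IsMonicLaurent M := by
    refine ⟨d, ?_, fun k hk => ?_⟩
    · simp [M, lo, C_mul_eq_smul, ← hu]
    · simp [M, lo, C_mul_eq_smul, hk]
  have hXM : X = C (u : R) * M + lo := by
    rw [← mul_assoc, ← map_mul, Units.mul_inv, map_one, one_mul, sub_add_cancel]
  obtain ⟨Minv, hMinv⟩ := hM.isUnit.exists_right_inv
  obtain ⟨n, hn⟩ := hR
  have hn' : maximalIdeal R ^ 2 ^ n = ⊥ :=
    le_bot_iff.1 ((Ideal.pow_le_pow_right Nat.lt_two_pow_self.le).trans hn.le)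
  obtain ⟨m, g, hm, hg, hfac⟩ := exists_isMonicLaurent_mul_eq_one_add n _ hn'
    (C (↑u⁻¹ : R) * Minv * lo) (Ideal.mul_mem_left _ _ hlo)
  refine ⟨M * m, Units.map (C : R →+* LaurentSeries R).toMonoidHom u * g, hM.mul hm,
    mul_mem (units_map_C_mem_polyUnits u) hg, ?_⟩
  have hCu : C (u : R) * C (↑u⁻¹ : R) = (1 : LaurentSeries R) := by
    rw [← map_mul, Units.mul_inv, map_one]
  simp only [Units.val_mul, Units.coe_map]
  linear_combination hXM + (C (u : R) * M) * hfac - lo * (M * Minv) * hCu - lo * hMinv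

theorem eq_one_of_eq_mul_of_mem_polyUnits {m m' : LaurentSeries R} {w : (LaurentSeries R)ˣ}
    (hm : IsMonicLaurent m) (hm' : IsMonicLaurent m') (hw : w ∈ polyUnits R)
    (h : m = m' * w) : w = 1 := by
  set π := mapRingHom (Γ := ℤ) (residue R)
  have hw0 : (π w).order = 0 :=
    order_eq_zero_of_mem_polySubring_of_mul_eq_one (mapRingHom_mem_polySubring _ hw.1)
      (mapRingHom_mem_polySubring _ (Submonoid.inv_val_mem_of_mem_units _ hw))
      (by rw [← map_mul, Units.mul_inv, map_one])
  have hord : m.order = m'.order := by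
    rw [← hm.order_mapRingHom (residue R), ← hm'.order_mapRingHom (residue R), h, map_mul,
      order_mul (hm'.isUnit.map π).ne_zero (w.isUnit.map π).ne_zero, hw0, add_zero]
  refine Units.ext (by_contra fun hne => ?_)
  set δ := (w : LaurentSeries R) - 1
  have hδ : δ ≠ 0 := sub_ne_zero.2 hne
  have hδle : δ.order ≤ 0 := order_nonpos_of_mem_polySubring (sub_mem hw.1 (one_mem _)) hδ
  have h1 : (m - m').coeff (m'.order + δ.order) = δ.leadingCoeff := by
    rw [show m - m' = m' * δ by rw [h]; ring, coeff_mul_order_add_order, hm'.leadingCoeff_eq_one,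
      one_mul]
  have h2 : (m - m').coeff (m'.order + δ.order) = 0 := by
    rw [coeff_sub]
    rcases hδle.lt_or_eq with hlt | heq
    · rw [coeff_eq_zero_of_lt_order (by omega), coeff_eq_zero_of_lt_order (by omega), sub_zero]
    · rw [heq, add_zero, ← leadingCoeff_eq, ← hord, ← leadingCoeff_eq, hm.leadingCoeff_eq_one,
        hm'.leadingCoeff_eq_one, sub_self]
  exact leadingCoeff_ne_zero.2 hδ (h1.symm.trans h2)

theorem existsUnique_isMonicLaurent_mul_mem_polyUnits (hR : IsNilpotent (maximalIdeal R))
    (x : (LaurentSeries R)ˣ) : ∃! mg : LaurentSeries R × (LaurentSeries R)ˣ,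
      IsMonicLaurent mg.1 ∧ mg.2 ∈ polyUnits R ∧ (x : LaurentSeries R) = mg.1 * mg.2 := by
  obtain ⟨m, g, hm, hg, hx⟩ := exists_isMonicLaurent_mul_mem_polyUnits hR x
  refine ⟨(m, g), ⟨hm, hg, hx⟩, ?_⟩
  rintro ⟨m', g'⟩ ⟨hm', hg', hx'⟩
  have hgg : g * g'⁻¹ = 1 := by
    refine eq_one_of_eq_mul_of_mem_polyUnits hm' hm (mul_mem hg (inv_mem hg')) ?_
    rw [Units.val_mul, ← mul_assoc, ← hx, hx', mul_assoc, Units.mul_inv, mul_one]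
  have hg'g : g' = g := (mul_inv_eq_one.1 hgg).symm
  rw [hg'g] at hx'
  exact Prod.ext ((Units.mul_left_inj g).1 (hx'.symm.trans hx)) hg'g

end Laurent

namespace MonoidAlgebra

variable {F P : Type*} [Field F] [CommGroup P] {p : ℕ} [ExpChar F p]

theorem sub_algebraMap_lift_one_mem_nilradical (hP : IsPGroup p P) (a : MonoidAlgebra F P) :
    a - algebraMap F _ (lift F F P 1 a) ∈ nilradical (MonoidAlgebra F P) := by
  have : ExpChar (MonoidAlgebra F P) p :=
    expChar_of_injective_algebraMap (algebraMap F _).injective p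
  induction a using MonoidAlgebra.induction_on with
  | of g =>
    obtain ⟨k, hk⟩ := hP g
    refine mem_nilradical.2 ⟨p ^ k, ?_⟩
    rw [lift_of, MonoidHom.one_apply, map_one, sub_pow_expChar_pow, ← map_pow, hk, map_one,
      one_pow, sub_self]
  | add a b ha hb =>
    rw [map_add, map_add, add_sub_add_comm]
    exact add_mem ha hb
  | smul r a ha =>
    rw [map_smul, smul_eq_mul, map_mul, Algebra.smul_def, ← mul_sub]
    exact Ideal.mul_mem_left _ _ ha

theorem isLocalRing_of_isPGroup (hP : IsPGroup p P) : IsLocalRing (MonoidAlgebra F P) := by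
  have : IsLocalHom (lift F F P 1 : MonoidAlgebra F P →+* F) := ⟨fun a ha => by
    have hnil := mem_nilradical.1 (sub_algebraMap_lift_one_mem_nilradical hP a)
    simpa using hnil.isUnit_add_left_of_commute (ha.map (algebraMap F _)) (Commute.all _ _)⟩
  exact RingHom.domain_isLocalRing (lift F F P 1 : MonoidAlgebra F P →+* F)

end MonoidAlgebra

theorem stmt_5_general {Fq F : Type*} [Field Fq] [Field F] [Algebra Fq F]
    {p : ℕ} (hp : p.Prime) [CharP Fq p]
    (P : Type*) [CommGroup P] [Finite P] (hP : ∃ k : ℕ, Nat.card P = p ^ k)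
    (x : (LaurentSeries (MonoidAlgebra F P))ˣ) :
    ∃! mg : LaurentSeries (MonoidAlgebra F P) × (LaurentSeries (MonoidAlgebra F P))ˣ,
      IsMonicLaurent mg.1 ∧ IsPolyLaurent (mg.2 : LaurentSeries (MonoidAlgebra F P)) ∧
      IsPolyLaurent ((mg.2⁻¹ : (LaurentSeries (MonoidAlgebra F P))ˣ) :
        LaurentSeries (MonoidAlgebra F P)) ∧
      (x : LaurentSeries (MonoidAlgebra F P)) = mg.1 * (mg.2 : LaurentSeries (MonoidAlgebra F P)) := by
  have : Fact p.Prime := ⟨hp⟩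
  have : CharP F p := charP_of_injective_algebraMap (algebraMap Fq F).injective p
  obtain ⟨k, hk⟩ := hP
  have := MonoidAlgebra.isLocalRing_of_isPGroup (F := F) (IsPGroup.of_card hk)
  have : IsArtinianRing (MonoidAlgebra F P) := IsArtinianRing.of_finite F _
  have hnil : IsNilpotent (maximalIdeal (MonoidAlgebra F P)) :=
    jacobson_eq_maximalIdeal (⊥ : Ideal (MonoidAlgebra F P)) bot_ne_top ▸
      IsArtinianRing.isNilpotent_jacobson_bot
  simpa only [Submonoid.mem_units_iff, Subring.mem_toSubmonoid, mem_polySubring, and_assoc] using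
    existsUnique_isMonicLaurent_mul_mem_polyUnits hnil x

/-- Let `F/F_q` be an algebraic field extension (`q = p^r`) and `P` a finite
abelian `p`-group.  Every unit of the Laurent series group ring `F((t⁻¹))[P]`
(realized as Laurent series over the group algebra `F[P]`) factors uniquely as a product
of a monic element (an element of `⋃_{n ∈ ℤ} t^n(1 + t⁻¹F[P][[t⁻¹]])`) and a unit of
`F[t][P]`. -/
theorem stmt_5 {Fq F : Type*} [Field Fq] [Fintype Fq] [Field F] [Algebra Fq F]
    [Algebra.IsAlgebraic Fq F] {p : ℕ} (hp : p.Prime) [CharP Fq p]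
    (P : Type*) [CommGroup P] [Finite P] (hP : ∃ k : ℕ, Nat.card P = p ^ k)
    (x : (LaurentSeries (MonoidAlgebra F P))ˣ) :
    ∃! mg : LaurentSeries (MonoidAlgebra F P) × (LaurentSeries (MonoidAlgebra F P))ˣ,
      IsMonicLaurent mg.1 ∧ IsPolyLaurent (mg.2 : LaurentSeries (MonoidAlgebra F P)) ∧
      IsPolyLaurent ((mg.2⁻¹ : (LaurentSeries (MonoidAlgebra F P))ˣ) :
        LaurentSeries (MonoidAlgebra F P)) ∧
      (x : LaurentSeries (MonoidAlgebra F P)) = mg.1 * (mg.2 : LaurentSeries (MonoidAlgebra F P)) :=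
  stmt_5_general (Fq := Fq) hp P hP x
end

section
/- Anderson's trick: let R be an F_q-algebra with no residue fields of degree d over F_q (i.e. there exist f_j, a_j ∈ R, 1 ≤ j ≤ M, with 1 = Σ_j f_j(a_j^{q^d} − a_j)). Then in any R-algebra setting of twisted power series over matrices: for every matrix Q ∈ M_n(R), n < N and the twisted relation τ^d a = a^{q^d} τ^d, one has the congruence 1 − Qτ^d Z^n ≡ Π_{j=1}^{M} (1 − (Qf_jτ^d)a_j Z^n)·(1 − a_j(Qf_jτ^d)Z^n)^{−1} mod Z^{n+1} in M_n(R){τ}[[Z]]/Z^{n+1}. -/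
theorem ring_key' {T : Type*} [Ring T] (y c s g : T) (hc : Commute y c) (hs : Commute y s) :
  (1 - c*y)*(1 - s*y + y^2*g) = 1 - (c+s)*y + y^2*(g + c*s - c*y*g) := by
  have h1 : c*y*(s*y) = y^2*(c*s) := by
    rw [mul_assoc c, ← mul_assoc y, hs.eq, mul_assoc s, ← pow_two, ← mul_assoc,
      ((hc.pow_left 2).mul_right (hs.pow_left 2)).symm.eq]
  have h2 : c*y*(y^2*g) = y^2*(c*y*g) := by
    rw [← mul_assoc, mul_assoc c, ← pow_succ', (hc.pow_left 3).symm.eq,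
      show (3:ℕ) = 2+1 from rfl, pow_add, pow_one, mul_assoc, mul_assoc, ← mul_assoc y, hc.eq, mul_assoc]
  calc (1 - c*y)*(1 - s*y + y^2*g)
      = 1 - s*y + y^2*g - (c*y - c*y*(s*y) + c*y*(y^2*g)) := by noncomm_ring
    _ = 1 - (c+s)*y + y^2*(g + c*s - c*y*g) := by rw [h1, h2]; noncomm_ring

theorem list_key' {T : Type*} [Ring T] (n : ℕ) (l : List T) :
    ∃ g : Polynomial T,
      (l.map fun c => 1 - Polynomial.C c * Polynomial.X ^ n).prod
        = 1 - Polynomial.C l.sum * Polynomial.X ^ n + (Polynomial.X ^ n)^2 * g := by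
  induction l with
  | nil => exact ⟨0, by simp⟩
  | cons c l ih =>
    obtain ⟨g, hg⟩ := ih
    refine ⟨g + Polynomial.C c * Polynomial.C l.sum - Polynomial.C c * Polynomial.X ^ n * g, ?_⟩
    rw [List.map_cons, List.prod_cons, hg, List.sum_cons, map_add,
      ring_key' _ _ _ _ ((Polynomial.commute_X (Polynomial.C c)).pow_left n)
        ((Polynomial.commute_X (Polynomial.C l.sum)).pow_left n)]



/-- (Anderson's trick.)  Let `R` be a commutative `F_q`-algebra with
`1 = ∑_j f_j(a_j^{q^d} − a_j)` (no residue fields of degree `d`), and let `T` play the role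
of the twisted ring `M_n(R){τ}`: `ι : R → T` embeds scalars (which commute with the
"matrix" `Q ∈ T`), and `τ ∈ T` satisfies the twisted relation `τ^d·x = x^{q^d}·τ^d` for
scalars `x ∈ R`.  Then in `T[[Z]]` (with `Z` central), for every `n ≥ 1`:
`1 − Qτ^d Z^n ≡ ∏_j (1 − (Qf_jτ^d)a_j Z^n)·(1 − a_j(Qf_jτ^d) Z^n)^{−1} mod Z^{n+1}`,
stated in denominator-cleared form:
`(1 − Qτ^d Z^n)·∏_j (1 − a_j(Qf_jτ^d)Z^n) ≡ ∏_j (1 − (Qf_jτ^d)a_j Z^n) mod Z^{n+1}`. -/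
theorem stmt_15 {Fq R T : Type*} [Field Fq] [Fintype Fq] [CommRing R] [Algebra Fq R]
    [Ring T] (ι : R →+* T) (τ Q : T) (d M nexp : ℕ) (hn : 1 ≤ nexp)
    (f a : Fin M → R)
    (hτ : ∀ x : R, τ ^ d * ι x = ι (x ^ (Fintype.card Fq ^ d)) * τ ^ d)
    (hQ : ∀ x : R, Commute (ι x) Q)
    (hone : (1 : R) = ∑ j, f j * ((a j) ^ (Fintype.card Fq ^ d) - a j)) :
    ∃ g : Polynomial T,
      (1 - Polynomial.C (Q * τ ^ d) * Polynomial.X ^ nexp) *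
        (List.ofFn fun j : Fin M =>
          (1 - Polynomial.C (ι (a j) * (Q * ι (f j) * τ ^ d)) * Polynomial.X ^ nexp)).prod
      = (List.ofFn fun j : Fin M =>
          (1 - Polynomial.C ((Q * ι (f j) * τ ^ d) * ι (a j)) * Polynomial.X ^ nexp)).prod
        + Polynomial.X ^ (nexp + 1) * g := by
  -- the key sum identity
  have hsum : Q * τ ^ d + ∑ j, ι (a j) * (Q * ι (f j) * τ ^ d)
      = ∑ j, (Q * ι (f j) * τ ^ d) * ι (a j) := by
    have hterm : ∀ j, (Q * ι (f j) * τ ^ d) * ι (a j) - ι (a j) * (Q * ι (f j) * τ ^ d)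
        = Q * ι (f j * ((a j) ^ (Fintype.card Fq ^ d) - a j)) * τ ^ d := by
      intro j
      have h1 : (Q * ι (f j) * τ ^ d) * ι (a j) = Q * ι (f j * (a j) ^ (Fintype.card Fq ^ d)) * τ ^ d := by
        rw [mul_assoc (Q * ι (f j)), hτ, ← mul_assoc, mul_assoc Q, ← map_mul]
      have h2 : ι (a j) * (Q * ι (f j) * τ ^ d) = Q * ι (f j * a j) * τ ^ d := by
        rw [← mul_assoc, ← mul_assoc, (hQ (a j)).eq, mul_assoc Q, ← map_mul, mul_comm (a j)]
      rw [h1, h2, ← sub_mul, ← mul_sub Q, ← map_sub, mul_sub]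
    have : ∑ j, ((Q * ι (f j) * τ ^ d) * ι (a j) - ι (a j) * (Q * ι (f j) * τ ^ d)) = Q * τ ^ d := by
      simp only [hterm]
      rw [← Finset.sum_mul, ← Finset.mul_sum, ← map_sum, ← hone, map_one, mul_one]
    rw [← this, Finset.sum_sub_distrib]
    abel
  obtain ⟨g1, hg1⟩ := list_key' nexp ((Q * τ ^ d) :: List.ofFn fun j : Fin M => ι (a j) * (Q * ι (f j) * τ ^ d))
  obtain ⟨g2, hg2⟩ := list_key' nexp (List.ofFn fun j : Fin M => (Q * ι (f j) * τ ^ d) * ι (a j))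
  rw [List.map_cons, List.prod_cons, List.sum_cons] at hg1
  rw [List.map_ofFn] at hg1 hg2
  simp only [Function.comp_def] at hg1 hg2
  rw [List.sum_ofFn] at hg1 hg2
  refine ⟨Polynomial.X ^ (nexp - 1) * (g1 - g2), ?_⟩
  rw [hg1, hg2, hsum, ← mul_assoc, ← pow_add]
  have : nexp + 1 + (nexp - 1) = nexp * 2 := by omega
  rw [this, ← pow_mul]
  noncomm_ring
end

section
/- Finite case of the volume formula: let R = F_q[G] for finite abelian G, and H₁, H₂ finite R[t]-modules that are free as R-modules, and γ : H₁ → H₂ an R-module isomorphism (not necessarily t-linear). Let t₁, t₂ denote the actions of t on H₁, H₂. Then det_{R[[T^{−1}]]}( (1 − (γ^{−1}t₂γ)T^{−1})(1 − t₁T^{−1})^{−1} | H₁ )|_{T=t} = |H₂|_G / |H₁|_G, where |H_i|_G is the monic generator of Fitt^0_{R[t]}(H_i), i.e. det(t·Id − t_i). -/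
/-!
With `u = T⁻¹` and `s = T`, the factor `1 - u • M` equals `u • (s • 1 - M)`, so its
determinant is `u ^ m` times the characteristic polynomial of `M` evaluated at `T`. The powers
`u ^ m` cancel in the quotient, and conjugating `t₂` by `γ` does not change its characteristic
polynomial.
-/

open Polynomial

theorem LaurentSeries.single_one_mul_single_neg_one (R : Type*) [CommRing R] :
    (HahnSeries.single (1 : ℤ) (1 : R) : LaurentSeries R) * HahnSeries.single (-1) 1 = 1 := by
  rw [HahnSeries.single_mul_single, add_neg_cancel, mul_one, HahnSeries.single_zero_one]

namespace Matrix

variable {n : Type*} [Fintype n] [DecidableEq n]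

theorem det_one_sub_smul_eq_pow_mul_eval_charpoly {A : Type*} [CommRing A] (N : Matrix n n A)
    {u s : A} (hus : u * s = 1) :
    (1 - u • N).det = u ^ Fintype.card n * N.charpoly.eval s := by
  have hfactor : 1 - u • N = u • (scalar n s - N) := by
    rw [smul_sub, scalar_apply, ← smul_one_eq_diagonal, smul_smul, hus, one_smul]
  rw [hfactor, det_smul, eval_charpoly]

theorem det_one_sub_smul_map_eq_pow_mul_aeval_charpoly {R A : Type*} [CommRing R] [CommRing A]
    [Algebra R A] (M : Matrix n n R) {u s : A} (hus : u * s = 1) :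
    (1 - u • M.map (algebraMap R A)).det = u ^ Fintype.card n * aeval s M.charpoly := by
  rw [det_one_sub_smul_eq_pow_mul_eval_charpoly _ hus, charpoly_map, eval_map_algebraMap]

theorem det_mul_ringInverse {α : Type*} [CommRing α] (A B : Matrix n n α) :
    (A * Ring.inverse B).det = A.det * Ring.inverse B.det := by
  rw [← nonsing_inv_eq_ringInverse, det_mul, det_nonsing_inv]

end Matrix

theorem Ring.mul_mul_inverse_mul_cancel_left {M₀ : Type*} [CommMonoidWithZero M₀] {c : M₀}
    (hc : IsUnit c) (a b : M₀) : c * a * Ring.inverse (c * b) = a * Ring.inverse b := by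
  calc c * a * Ring.inverse (c * b) = a * Ring.inverse b * (c * Ring.inverse c) := by
        rw [Ring.mul_inverse_rev]; ac_rfl
    _ = a * Ring.inverse b := by rw [Ring.mul_inverse_cancel _ hc, mul_one]

theorem LinearMap.charpoly_toMatrix_conj {R M₁ M₂ ι₁ ι₂ : Type*} [CommRing R]
    [AddCommGroup M₁] [Module R M₁] [AddCommGroup M₂] [Module R M₂] [Fintype ι₁] [DecidableEq ι₁]
    [Fintype ι₂] [DecidableEq ι₂] (b₁ : Module.Basis ι₁ R M₁) (b₂ : Module.Basis ι₂ R M₂)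
    (e : M₁ ≃ₗ[R] M₂) (f : M₂ →ₗ[R] M₂) :
    (LinearMap.toMatrix b₁ b₁ (e.symm.toLinearMap ∘ₗ f ∘ₗ e.toLinearMap)).charpoly
      = (LinearMap.toMatrix b₂ b₂ f).charpoly := by
  have := Module.Free.of_basis b₁
  have := Module.Finite.of_basis b₁
  have := Module.Free.of_basis b₂
  have := Module.Finite.of_basis b₂
  rw [LinearMap.charpoly_toMatrix, LinearMap.charpoly_toMatrix, ← e.symm.charpoly_conj f]
  rfl

set_option synthInstance.maxHeartbeats 1000000 in
theorem stmt_19_general {Fq G : Type*} [Field Fq] [CommGroup G]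
    {H₁ H₂ : Type*} [AddCommGroup H₁] [Module (MonoidAlgebra Fq G) H₁]
    [AddCommGroup H₂] [Module (MonoidAlgebra Fq G) H₂]
    {m : ℕ} (b₁ : Module.Basis (Fin m) (MonoidAlgebra Fq G) H₁)
    (b₂ : Module.Basis (Fin m) (MonoidAlgebra Fq G) H₂)
    (t₁ : H₁ →ₗ[MonoidAlgebra Fq G] H₁) (t₂ : H₂ →ₗ[MonoidAlgebra Fq G] H₂)
    (γ : H₁ ≃ₗ[MonoidAlgebra Fq G] H₂) :
    (letI R := MonoidAlgebra Fq G
     letI L := LaurentSeries R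
     letI u : L := HahnSeries.single (1 : ℤ) (1 : R)
     letI ts : L := HahnSeries.single (-1 : ℤ) (1 : R)
     Matrix.det
        ((1 - u • (LinearMap.toMatrix b₁ b₁
            (γ.symm.toLinearMap ∘ₗ t₂ ∘ₗ γ.toLinearMap)).map (algebraMap R L)) *
          Ring.inverse (1 - u • (LinearMap.toMatrix b₁ b₁ t₁).map (algebraMap R L)))
      = Polynomial.aeval ts (LinearMap.toMatrix b₂ b₂ t₂).charpoly *
          Ring.inverse (Polynomial.aeval ts (LinearMap.toMatrix b₁ b₁ t₁).charpoly)) := by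
  have hus := LaurentSeries.single_one_mul_single_neg_one (MonoidAlgebra Fq G)
  have hunit : IsUnit ((HahnSeries.single (1 : ℤ) (1 : MonoidAlgebra Fq G) :
      LaurentSeries (MonoidAlgebra Fq G)) ^ Fintype.card (Fin m)) :=
    (IsUnit.of_mul_eq_one _ hus).pow _
  rw [Matrix.det_mul_ringInverse, Matrix.det_one_sub_smul_map_eq_pow_mul_aeval_charpoly _ hus,
    Matrix.det_one_sub_smul_map_eq_pow_mul_aeval_charpoly _ hus,
    LinearMap.charpoly_toMatrix_conj b₁ b₂, Ring.mul_mul_inverse_mul_cancel_left hunit]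

set_option synthInstance.maxHeartbeats 1000000 in
/-- (Finite case of the volume formula.)  Let `R = F_q[G]` for a finite
abelian group `G`, and `H₁, H₂` finite `R[t]`-modules (given as `R`-modules with the
`R`-linear endomorphisms `t₁, t₂` describing the `t`-action), free of rank `m` over `R`
with bases `b₁, b₂`, and let `γ : H₁ ≅ H₂` be an `R`-module isomorphism (not necessarily
`t`-linear).  Then, in `F_q((t⁻¹))[G] = (F_q[G])((t⁻¹))` (Laurent series in `u = t⁻¹`,
with `t = single (−1) 1`), the nuclear determinant
`det((1 − (γ⁻¹t₂γ)T⁻¹)(1 − t₁T⁻¹)⁻¹ | H₁)` evaluated at `T = t` equals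
`|H₂|_G / |H₁|_G = det(t·Id − t₂)·det(t·Id − t₁)⁻¹`. -/
theorem stmt_19 {Fq G : Type*} [Field Fq] [Fintype Fq] [CommGroup G] [Finite G]
    {H₁ H₂ : Type*} [AddCommGroup H₁] [Module (MonoidAlgebra Fq G) H₁]
    [AddCommGroup H₂] [Module (MonoidAlgebra Fq G) H₂] [Finite H₁] [Finite H₂]
    {m : ℕ} (b₁ : Module.Basis (Fin m) (MonoidAlgebra Fq G) H₁)
    (b₂ : Module.Basis (Fin m) (MonoidAlgebra Fq G) H₂)
    (t₁ : H₁ →ₗ[MonoidAlgebra Fq G] H₁) (t₂ : H₂ →ₗ[MonoidAlgebra Fq G] H₂)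
    (γ : H₁ ≃ₗ[MonoidAlgebra Fq G] H₂) :
    (letI R := MonoidAlgebra Fq G
     letI L := LaurentSeries R
     letI u : L := HahnSeries.single (1 : ℤ) (1 : R)
     letI ts : L := HahnSeries.single (-1 : ℤ) (1 : R)
     Matrix.det
        ((1 - u • (LinearMap.toMatrix b₁ b₁
            (γ.symm.toLinearMap ∘ₗ t₂ ∘ₗ γ.toLinearMap)).map (algebraMap R L)) *
          Ring.inverse (1 - u • (LinearMap.toMatrix b₁ b₁ t₁).map (algebraMap R L)))
      = Polynomial.aeval ts (LinearMap.toMatrix b₂ b₂ t₂).charpoly *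
          Ring.inverse (Polynomial.aeval ts (LinearMap.toMatrix b₁ b₁ t₁).charpoly)) :=
  stmt_19_general b₁ b₂ t₁ t₂ γ
end
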